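/- arXiv:2308.10582 — 2 statements merged into one kernel-verified Lean document; each statement's English description precedes it below -/
import Mathlib

section
/- Let φ ∈ C²(ℝ^{d−1}, ℝ) with Hφ(0) positive definite. Define F(ξ, x) = (∇φ(ξ₋) + ξ_d x₋, ⟨ξ₋, x₋⟩ + x_d) for ξ = (ξ₋, ξ_d) ∈ ℝ^{d−1} × ℝ and x = (x₋, x_d). Then there exist a point ξ⁰ = (ξ⁰₋, 1) with ξ⁰₋ in a small ball around 0, and a point x⁰ with x⁰₋ ≠ 0, such that F(ξ⁰, x⁰) = 0 and the Jacobian ∇_ξ F(ξ⁰, x⁰) is invertible. -/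
open scoped BigOperators
open Matrix

noncomputable def ee (n : ℕ) : Fin n → (Fin n → ℝ) := fun i => Pi.single i 1

lemma quad_eq {n : ℕ} (B : (Fin n → ℝ) →L[ℝ] (Fin n → ℝ) →L[ℝ] ℝ) (x : Fin n → ℝ) :
    x ⬝ᵥ ((Matrix.of fun i j => B (ee n i) (ee n j)) *ᵥ x) = B x x := by
  have hx : x = ∑ i, x i • ee n i := by
    ext j; simp [ee, Pi.single_apply]
  have h1 : ∀ y, B x y = ∑ i, x i * B (ee n i) y := fun y => by
    conv_lhs => rw [hx]
    simp
  have h2 : ∀ i, B (ee n i) x = ∑ j, x j * B (ee n i) (ee n j) := fun i => by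
    conv_lhs => rw [hx]
    simp
  rw [h1]
  simp only [dotProduct, Matrix.mulVec, Matrix.of_apply]
  refine Finset.sum_congr rfl fun i _ => ?_
  rw [h2]
  congr 1
  exact Finset.sum_congr rfl fun j _ => mul_comm _ _

set_option maxHeartbeats 1000000 in
/-- For `φ ∈ C²(ℝ^{d−1})` with positive definite Hessian at `0` and
`F(ξ, x) = (∇φ(ξ₋) + ξ_d x₋, ⟨ξ₋, x₋⟩ + x_d)`, there exist a point
`ξ⁰ = (ξ⁰₋, 1)` with `ξ⁰₋` in a small ball around `0` and a point `x⁰` with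
`x⁰₋ ≠ 0` such that `F(ξ⁰, x⁰) = 0` and the Jacobian
`∇_ξ F(ξ⁰, x⁰) = [[Hφ(ξ⁰₋), x⁰₋], [x⁰₋ᵀ, 0]]` is invertible. -/
theorem exists_nondegenerate_zero_of_F
    (n : ℕ) (hn : 1 ≤ n) (φ : (Fin n → ℝ) → ℝ) (hφ : ContDiff ℝ 2 φ)
    (hHess : (Matrix.of fun i j : Fin n =>
        fderiv ℝ (fun y => fderiv ℝ φ y (Pi.single j 1)) 0 (Pi.single i 1)).PosDef) :
    ∀ ε > (0 : ℝ), ∃ ξ₀ ∈ Metric.ball (0 : Fin n → ℝ) ε, ∃ x₀ : (Fin n → ℝ) × ℝ,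
      x₀.1 ≠ 0 ∧
      (fun i : Fin n => fderiv ℝ φ ξ₀ (Pi.single i 1)) + (1 : ℝ) • x₀.1 = 0 ∧
      (∑ i : Fin n, ξ₀ i * x₀.1 i) + x₀.2 = 0 ∧
      IsUnit (Matrix.fromBlocks
        (Matrix.of fun i j : Fin n =>
          fderiv ℝ (fun y => fderiv ℝ φ y (Pi.single j 1)) ξ₀ (Pi.single i 1))
        (Matrix.replicateCol Unit x₀.1) (Matrix.replicateRow Unit x₀.1) 0).det := by
  intro ε hε
  have hφ1 : ContDiff ℝ 1 (fderiv ℝ φ) := hφ.fderiv_right (by norm_num)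
  have hd1 : Differentiable ℝ φ := hφ.differentiable (by norm_num)
  have hd2 : Differentiable ℝ (fderiv ℝ φ) := hφ1.differentiable one_ne_zero
  set f2 : (Fin n → ℝ) → ((Fin n → ℝ) →L[ℝ] ((Fin n → ℝ) →L[ℝ] ℝ)) :=
    fderiv ℝ (fderiv ℝ φ) with hf2def
  have hc2 : Continuous f2 := hφ1.continuous_fderiv one_ne_zero
  -- rewrite the matrix entries as second derivative
  have key : ∀ (ξ v w : Fin n → ℝ),
      fderiv ℝ (fun y => fderiv ℝ φ y w) ξ v = f2 ξ v w := by
    intro ξ v w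
    rw [fderiv_clm_apply (hd2 ξ) (differentiableAt_const w)]
    simp [hf2def]
  set H : (Fin n → ℝ) → Matrix (Fin n) (Fin n) ℝ :=
    fun ξ => Matrix.of fun i j => f2 ξ (ee n i) (ee n j) with hHdef
  have hH : ∀ ξ : Fin n → ℝ, (Matrix.of fun i j : Fin n =>
      fderiv ℝ (fun y => fderiv ℝ φ y (Pi.single j 1)) ξ (Pi.single i 1)) = H ξ := by
    intro ξ; ext i j; exact key ξ _ _
  have hA : (H 0).PosDef := hH 0 ▸ hHess
  -- symmetry of second derivative
  have hsymm : ∀ (ξ v w : Fin n → ℝ), f2 ξ v w = f2 ξ w v := fun ξ v w =>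
    second_derivative_symmetric (fun y => (hd1 y).hasFDerivAt) (hd2 ξ).hasFDerivAt v w
  have hherm : ∀ ξ, (H ξ).IsHermitian := by
    intro ξ
    ext i j
    simp only [Matrix.conjTranspose_apply, Matrix.of_apply, star_trivial, hHdef]
    exact hsymm ξ _ _
  -- coercivity of H 0
  have i0 : Fin n := ⟨0, hn⟩
  haveI : Nontrivial (Fin n → ℝ) :=
    ⟨0, ee n i0, fun h => by simpa [ee] using congrFun h i0⟩
  obtain ⟨u, huS, hmin⟩ := (isCompact_sphere (0 : Fin n → ℝ) 1).exists_isMinOn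
    (NormedSpace.sphere_nonempty.mpr zero_le_one)
    (Continuous.continuousOn (by continuity : Continuous fun x : Fin n → ℝ => f2 0 x x))
  set c : ℝ := f2 0 u u with hcdef
  have hu0 : u ≠ 0 := by
    intro h
    rw [Metric.mem_sphere, h] at huS
    simp at huS
  have hc : 0 < c := by
    have := hA.dotProduct_mulVec_pos hu0
    rwa [star_trivial, hHdef, quad_eq] at this
  have hlower : ∀ x : Fin n → ℝ, c * ‖x‖ ^ 2 ≤ f2 0 x x := by
    intro x
    rcases eq_or_ne x 0 with rfl | hx
    · simp
    · have hxpos : (0 : ℝ) < ‖x‖ := norm_pos_iff.mpr hx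
      have hmem : (‖x‖⁻¹ • x) ∈ Metric.sphere (0 : Fin n → ℝ) 1 := by
        simp [norm_smul, abs_of_pos (inv_pos.mpr hxpos), inv_mul_cancel₀ hxpos.ne']
      have h1 : c ≤ f2 0 (‖x‖⁻¹ • x) (‖x‖⁻¹ • x) := hmin hmem
      have h2 : f2 0 (‖x‖⁻¹ • x) (‖x‖⁻¹ • x) = (‖x‖⁻¹) ^ 2 * f2 0 x x := by
        simp [_root_.map_smul, smul_eq_mul]
        ring
      rw [h2] at h1
      have h3 := mul_le_mul_of_nonneg_left h1 (le_of_lt (pow_pos hxpos 2))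
      calc c * ‖x‖ ^ 2 = ‖x‖ ^ 2 * c := by ring
        _ ≤ ‖x‖ ^ 2 * ((‖x‖⁻¹) ^ 2 * f2 0 x x) := h3
        _ = f2 0 x x := by field_simp
  -- positive definiteness in a neighbourhood
  obtain ⟨δ, hδ, hδball⟩ := Metric.eventually_nhds_iff.mp
    (Metric.tendsto_nhds (α := (Fin n → ℝ) →L[ℝ] (Fin n → ℝ) →L[ℝ] ℝ) |>.mp (hc2.tendsto (0 : Fin n → ℝ)) (c / 2) (by positivity))
  have hposdef : ∀ ξ : Fin n → ℝ, ‖ξ‖ < δ → (H ξ).PosDef := by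
    intro ξ hξ
    refine Matrix.PosDef.of_dotProduct_mulVec_pos (hherm ξ) fun x hx => ?_
    rw [star_trivial, hHdef, quad_eq]
    have hxpos : (0 : ℝ) < ‖x‖ := norm_pos_iff.mpr hx
    have hdist : dist (f2 ξ) (f2 0) < c / 2 := hδball (show dist ξ (0 : Fin n → ℝ) < δ by simpa [dist_zero_right] using hξ)
    have hbound : |f2 ξ x x - f2 0 x x| ≤ (c / 2) * (‖x‖ * ‖x‖) := by
      have h1 : f2 ξ x x - f2 0 x x = ((f2 ξ - f2 0) x) x := by simp
      rw [h1]
      calc |((f2 ξ - f2 0) x) x| ≤ ‖f2 ξ - f2 0‖ * ‖x‖ * ‖x‖ := by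
            have := (f2 ξ - f2 0).le_opNorm₂ x x
            simpa using this
        _ ≤ (c / 2) * (‖x‖ * ‖x‖) := by
            have hne : ‖f2 ξ - f2 0‖ < c / 2 := by
              exact lt_of_eq_of_lt (dist_eq_norm (f2 ξ) (f2 0)).symm hdist
            nlinarith [norm_nonneg x]
    have hl := hlower x
    have habs := abs_le.mp hbound
    have hsq : ‖x‖ ^ 2 = ‖x‖ * ‖x‖ := sq ‖x‖
    nlinarith [habs.1, hl, hsq, mul_pos hxpos hxpos]
  -- derivative of t ↦ ∂₀φ(t e₀) at 0 is positive
  set g : ℝ → ℝ := fun t => fderiv ℝ φ (t • ee n i0) (ee n i0) with hgdef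
  have he0 : ee n i0 ≠ 0 := fun h => by simpa [ee] using congrFun h i0
  have hA00 : 0 < f2 0 (ee n i0) (ee n i0) := by
    have := hA.dotProduct_mulVec_pos he0
    rwa [star_trivial, hHdef, quad_eq] at this
  have hg' : HasDerivAt g (f2 0 (ee n i0) (ee n i0)) 0 := by
    have hcurve : HasDerivAt (fun t : ℝ => t • ee n i0) (ee n i0) 0 := by
      simpa using (hasDerivAt_id (0 : ℝ)).smul_const (ee n i0)
    have hF : HasFDerivAt (fun ξ => fderiv ℝ φ ξ (ee n i0))
        ((f2 0).flip (ee n i0)) ((0 : ℝ) • ee n i0) := by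
      have h0 : ((0 : ℝ) • ee n i0) = (0 : Fin n → ℝ) := zero_smul _ _
      rw [h0]
      have := (hd2 0).hasFDerivAt.clm_apply (hasFDerivAt_const (ee n i0) 0)
      simpa using this
    have := hF.comp_hasDerivAt 0 hcurve
    exact this
  -- find t with g t ≠ 0
  set m : ℝ := min ε δ with hmdef
  have hm : 0 < m := lt_min hε hδ
  obtain ⟨t, ht0, htm, hgt⟩ : ∃ t : ℝ, 0 ≤ t ∧ t < m ∧ g t ≠ 0 := by
    rcases eq_or_ne (g 0) 0 with hg0 | hg0
    · have hslope := hasDerivAt_iff_tendsto_slope.mp hg'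
      have hev : ∀ᶠ s in nhdsWithin 0 {(0:ℝ)}ᶜ, 0 < slope g 0 s :=
        hslope.eventually (eventually_gt_nhds hA00)
      have hev2 : ∀ᶠ s in nhdsWithin 0 (Set.Ioi (0:ℝ)), 0 < slope g 0 s :=
        hev.filter_mono (nhdsWithin_mono 0 (fun s hs => ne_of_gt hs))
      have hev3 : ∀ᶠ s in nhdsWithin 0 (Set.Ioi (0:ℝ)), s < m :=
        eventually_nhdsWithin_of_eventually_nhds (eventually_lt_nhds hm)
      have hev4 : ∀ᶠ s in nhdsWithin 0 (Set.Ioi (0:ℝ)), 0 < s :=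
        eventually_mem_nhdsWithin.mono (fun s hs => hs)
      obtain ⟨t, h1, h2, h3⟩ := (hev2.and (hev3.and hev4)).exists
      refine ⟨t, le_of_lt h3, h2, ?_⟩
      intro hgt0
      rw [slope_def_field, hg0, hgt0] at h1
      simp at h1
    · exact ⟨0, le_refl 0, hm, hg0⟩
  -- assemble
  set ξ₀ : Fin n → ℝ := t • ee n i0 with hξ₀def
  have hξ₀norm : ‖ξ₀‖ = t := by
    rw [hξ₀def, norm_smul]
    simp [ee, Pi.norm_single, abs_of_nonneg ht0]
  refine ⟨ξ₀, ?_, ⟨fun i => -(fderiv ℝ φ ξ₀ (Pi.single i 1)),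
      -∑ i, ξ₀ i * (-(fderiv ℝ φ ξ₀ (Pi.single i 1)))⟩, ?_, ?_, ?_, ?_⟩
  · rw [Metric.mem_ball, dist_zero_right, hξ₀norm]
    exact lt_of_lt_of_le htm (min_le_left _ _)
  · intro h
    apply hgt
    have := congrFun h i0
    simp only [Pi.zero_apply, neg_eq_zero] at this
    simpa [hgdef, ee, hξ₀def] using this
  · funext i
    simp
  · simp
  · -- determinant
    set x : Fin n → ℝ := fun i => -(fderiv ℝ φ ξ₀ (Pi.single i 1)) with hxdef
    rw [hH ξ₀]
    have hpd : (H ξ₀).PosDef := hposdef ξ₀ (by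
      rw [hξ₀norm]; exact lt_of_lt_of_le htm (min_le_right _ _))
    haveI : Invertible (H ξ₀) := (H ξ₀).invertibleOfIsUnitDet hpd.det_pos.ne'.isUnit
    rw [Matrix.det_fromBlocks₁₁, Matrix.invOf_eq_nonsing_inv]
    have hq : ((Matrix.replicateRow Unit x * (H ξ₀)⁻¹ * Matrix.replicateCol Unit x) : Matrix Unit Unit ℝ) () ()
        = x ⬝ᵥ ((H ξ₀)⁻¹ *ᵥ x) := by
      simp only [Matrix.mul_apply, Matrix.replicateRow_apply, Matrix.replicateCol_apply, dotProduct,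
        Matrix.mulVec, Finset.sum_mul, Finset.mul_sum]
      rw [Finset.sum_comm]
      refine Finset.sum_congr rfl fun i _ => Finset.sum_congr rfl fun j _ => by ring
    have hx0 : x ≠ 0 := by
      intro h
      apply hgt
      have := congrFun h i0
      simp only [hxdef, Pi.zero_apply, neg_eq_zero] at this
      simpa [hgdef, ee, hξ₀def] using this
    have hqpos : 0 < x ⬝ᵥ ((H ξ₀)⁻¹ *ᵥ x) := by
      have := hpd.inv.dotProduct_mulVec_pos hx0
      rwa [star_trivial] at this
    have hdet1 : (0 - Matrix.replicateRow Unit x * (H ξ₀)⁻¹ * Matrix.replicateCol Unit x).det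
        = -(x ⬝ᵥ ((H ξ₀)⁻¹ *ᵥ x)) := by
      rw [Matrix.det_unique]
      simp only [Matrix.sub_apply, Matrix.zero_apply, zero_sub]
      rw [hq]
    rw [hdet1, isUnit_iff_ne_zero]
    have hdp := hpd.det_pos
    intro hcontra
    nlinarith
end

section
/- Let φ ∈ C²(ℝ^{d−1}, ℝ) with Hφ(0) positive definite, and define Φ_x(ξ) = φ(ξ₋) + ξ_d(⟨ξ₋, x₋⟩ + x_d) for ξ, x ∈ ℝ^d. Then there exist a nonempty open set U ⊂ ℝ^d and an open set V ⊂ ℝ^{d−1} × (1/4, 4) and a unique function g : U → V such that for all x ∈ U, ∇_ξ Φ_x(g(x)) = 0 and the Hessian H_ξ Φ_x(g(x)) is invertible. -/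
open scoped BigOperators

lemma clm_pi_apply {k : ℕ} (L : (Fin k → ℝ) →L[ℝ] ℝ) (v : Fin k → ℝ) :
    L v = ∑ i, v i * L (Pi.single i 1) := by
  conv_lhs => rw [← Finset.univ_sum_single v]
  rw [map_sum]
  refine Finset.sum_congr rfl fun i _ => ?_
  have h : Pi.single i (v i) = v i • (Pi.single i (1:ℝ) : Fin k → ℝ) := by
    funext j
    by_cases hij : j = i
    · subst hij; simp
    · simp [Pi.single_eq_of_ne hij]
  rw [h, map_smul, smul_eq_mul]

lemma quad_comm {k : ℕ} (A : Matrix (Fin k) (Fin k) ℝ) (w : Fin k → ℝ) :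
    ∑ j, (∑ i, w i * A i j) * w j = ∑ i, w i * ∑ j, A i j * w j := by
  simp_rw [Finset.sum_mul, Finset.mul_sum]
  rw [Finset.sum_comm]
  exact Finset.sum_congr rfl fun i _ => Finset.sum_congr rfl fun j _ => by ring

lemma det_block_ne_zero {k : ℕ} (A : Matrix (Fin k) (Fin k) ℝ) (b : Fin k → ℝ)
    (hb : b ≠ 0)
    (hQ : ∀ v : Fin k → ℝ, v ≠ 0 → 0 < ∑ i, v i * ∑ j, A i j * v j)
    (M : Matrix (Fin (k+1)) (Fin (k+1)) ℝ)
    (hM1 : ∀ i j, M i.castSucc j.castSucc = A i j)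
    (hM2 : ∀ j, M (Fin.last k) j.castSucc = b j)
    (hM3 : ∀ i, M i.castSucc (Fin.last k) = b i)
    (hM4 : M (Fin.last k) (Fin.last k) = 0) : M.det ≠ 0 := by
  intro h
  obtain ⟨u, hu, hmv⟩ := Matrix.exists_mulVec_eq_zero_iff.2 h
  set v : Fin k → ℝ := fun i => u i.castSucc with hv
  set s : ℝ := u (Fin.last k) with hs
  have rowc : ∀ i, (∑ j, A i j * v j) + b i * s = 0 := by
    intro i
    have := congrFun hmv i.castSucc
    rw [Matrix.mulVec, dotProduct] at this
    rw [Fin.sum_univ_castSucc] at this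
    simpa [hM1, hM3, hv, hs] using this
  have rowl : (∑ j, b j * v j) = 0 := by
    have := congrFun hmv (Fin.last k)
    rw [Matrix.mulVec, dotProduct] at this
    rw [Fin.sum_univ_castSucc] at this
    simpa [hM2, hM4, hv, hs] using this
  have hv0 : v = 0 := by
    by_contra hv0
    have hpos := hQ v hv0
    have : ∑ i, v i * ∑ j, A i j * v j = -s * ∑ j, b j * v j := by
      rw [Finset.mul_sum]
      refine Finset.sum_congr rfl fun i _ => ?_
      have := rowc i
      have h2 : ∑ j, A i j * v j = -(b i * s) := by linarith
      rw [h2]; ring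
    rw [this, rowl, mul_zero] at hpos
    exact lt_irrefl _ hpos
  have hbs : ∀ i, b i * s = 0 := by
    intro i
    have h1 := rowc i
    have h2 : (∑ j, A i j * v j) = 0 := by
      refine Finset.sum_eq_zero fun j _ => ?_
      rw [show v j = 0 from congrFun hv0 j, mul_zero]
    rw [h2] at h1; linarith
  have hs0 : s = 0 := by
    obtain ⟨i, hi⟩ := Function.ne_iff.1 hb
    rcases mul_eq_zero.1 (hbs i) with h | h
    · exact absurd h hi
    · exact h
  apply hu
  funext i
  refine Fin.lastCases ?_ ?_ i
  · exact hs0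
  · intro j; exact congrFun hv0 j

lemma qball {k : ℕ} (hk : 0 < k) (A : (Fin k → ℝ) → Matrix (Fin k) (Fin k) ℝ)
    (hA : ∀ i j, Continuous fun y => A y i j)
    (h0 : ∀ v : Fin k → ℝ, v ≠ 0 → 0 < ∑ i, v i * ∑ j, A 0 i j * v j) :
    ∃ r > 0, ∀ y ∈ Metric.ball (0 : Fin k → ℝ) r, ∀ v : Fin k → ℝ, v ≠ 0 →
      0 < ∑ i, v i * ∑ j, A y i j * v j := by
  haveI : Nonempty (Fin k) := ⟨⟨0, hk⟩⟩
  set f : (Fin k → ℝ) × (Fin k → ℝ) → ℝ :=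
    fun p => ∑ i, p.2 i * ∑ j, A p.1 i j * p.2 j with hf_def
  have hf : Continuous f := by
    refine continuous_finset_sum _ fun i _ => ?_
    refine Continuous.mul (continuous_apply i |>.comp continuous_snd) ?_
    refine continuous_finset_sum _ fun j _ => ?_
    exact ((hA i j).comp continuous_fst).mul ((continuous_apply j).comp continuous_snd)
  have hopen : IsOpen {p : (Fin k → ℝ) × (Fin k → ℝ) | 0 < f p} :=
    isOpen_lt continuous_const hf
  have hS : IsCompact (Metric.sphere (0 : Fin k → ℝ) 1) := isCompact_sphere 0 1
  have hsub : ({(0 : Fin k → ℝ)} ×ˢ Metric.sphere (0 : Fin k → ℝ) 1) ⊆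
      {p | 0 < f p} := by
    rintro ⟨y, v⟩ ⟨hy, hv⟩
    simp only [Set.mem_singleton_iff] at hy
    subst hy
    have hvne : v ≠ 0 := by
      intro h
      rw [h] at hv
      simp at hv
    exact h0 v hvne
  obtain ⟨u, w, hu, hw, h0u, hSw, huw⟩ :=
    generalized_tube_lemma isCompact_singleton hS hopen hsub
  obtain ⟨r, hr, hball⟩ := Metric.isOpen_iff.1 hu 0 (h0u rfl)
  refine ⟨r, hr, fun y hy v hv => ?_⟩
  have hnv : (0:ℝ) < ‖v‖ := norm_pos_iff.2 hv
  set v' : Fin k → ℝ := ‖v‖⁻¹ • v with hv'_def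
  have hv'S : v' ∈ Metric.sphere (0 : Fin k → ℝ) 1 := by
    simp only [Metric.mem_sphere, dist_zero_right, hv'_def, norm_smul, norm_inv, norm_norm]
    field_simp
  have hp : (y, v') ∈ {p | 0 < f p} := huw ⟨hball hy, hSw hv'S⟩
  have hvv : v = fun i => ‖v‖ * v' i := by
    funext i
    simp [hv'_def, mul_comm, inv_mul_cancel_left₀ hnv.ne']
    field_simp
  have key : ∑ i, v i * ∑ j, A y i j * v j
      = ‖v‖^2 * ∑ i, v' i * ∑ j, A y i j * v' j := by
    rw [Finset.mul_sum]
    refine Finset.sum_congr rfl fun i _ => ?_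
    rw [show ∑ j, A y i j * v j = ‖v‖ * ∑ j, A y i j * v' j by
      rw [Finset.mul_sum]
      refine Finset.sum_congr rfl fun j _ => ?_
      rw [congrFun hvv j]; ring]
    rw [congrFun hvv i]; ring
  rw [key]
  have := hp
  rw [Set.mem_setOf_eq] at this
  positivity

lemma mono_grad {k : ℕ} (gj : Fin k → ((Fin k → ℝ) → ℝ))
    (hg : ∀ j, Differentiable ℝ (gj j))
    (s : Set (Fin k → ℝ)) (hconv : Convex ℝ s)
    (hpos : ∀ y ∈ s, ∀ w : Fin k → ℝ, w ≠ 0 →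
      0 < ∑ j, (fderiv ℝ (gj j) y w) * w j)
    (a b : Fin k → ℝ) (ha : a ∈ s) (hb : b ∈ s) (hab : a ≠ b) :
    0 < ∑ j, (gj j a - gj j b) * (a j - b j) := by
  set w : Fin k → ℝ := a - b with hw_def
  have hwne : w ≠ 0 := sub_ne_zero.2 hab
  set ψ : ℝ → ℝ := fun t => ∑ j, gj j (b + t • w) * w j with hψ_def
  have hline : ∀ t : ℝ, HasDerivAt (fun t : ℝ => b + t • w) w t := by
    intro t
    have h1 : HasDerivAt (fun t : ℝ => t • w) ((1:ℝ) • w) t :=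
      (hasDerivAt_id t).smul_const w
    simpa using h1.const_add b
  have hψd : ∀ t : ℝ, HasDerivAt ψ (∑ j, (fderiv ℝ (gj j) (b + t • w) w) * w j) t := by
    intro t
    refine HasDerivAt.fun_sum fun j _ => ?_
    exact (((hg j (b + t • w)).hasFDerivAt.comp_hasDerivAt t (hline t))).mul_const (w j)
  have hmem : ∀ t ∈ Set.Icc (0:ℝ) 1, b + t • w ∈ s := by
    intro t ht
    have h : (1 - t) • b + t • a = b + t • w := by
      funext i
      simp [hw_def]
      ring
    rw [← h]
    exact hconv hb ha (by linarith [ht.1, ht.2]) ht.1 (by ring)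
  have hmono : StrictMonoOn ψ (Set.Icc (0:ℝ) 1) := by
    refine strictMonoOn_of_deriv_pos (convex_Icc 0 1) ?_ ?_
    · exact Continuous.continuousOn (by
        refine continuous_finset_sum _ fun j _ => ?_
        refine Continuous.mul ?_ continuous_const
        exact (hg j).continuous.comp (by continuity))
    · intro t ht
      rw [interior_Icc] at ht
      rw [(hψd t).deriv]
      exact hpos _ (hmem t ⟨ht.1.le, ht.2.le⟩) w hwne
  have h01 := hmono (Set.left_mem_Icc.2 zero_le_one) (Set.right_mem_Icc.2 zero_le_one)
    zero_lt_one
  have hψ0 : ψ 0 = ∑ j, gj j b * w j := by simp [hψ_def]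
  have hψ1 : ψ 1 = ∑ j, gj j a * w j := by
    simp only [hψ_def, one_smul, hw_def]
    congr 1
    funext j
    congr 1
    · congr 1
      funext i
      simp
  have : ∑ j, (gj j a - gj j b) * (a j - b j)
      = ψ 1 - ψ 0 := by
    rw [hψ0, hψ1, ← Finset.sum_sub_distrib]
    refine Finset.sum_congr rfl fun j _ => ?_
    have : w j = a j - b j := by simp [hw_def]
    rw [this]
    ring
  rw [this]
  linarith [h01]

set_option maxHeartbeats 1000000 in
/-- Lemma 3.1 (main case): for `φ ∈ C²(ℝ^{d−1})` with `Hφ(0)` positive definite and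
`Φ_x(ξ) = φ(ξ₋) + ξ_d(⟨ξ₋, x₋⟩ + x_d)`, there exist a nonempty open set `U ⊆ ℝ^d`
and an open set `V ⊆ ℝ^{d−1} × (1/4, 4)` and a unique function `g : U → V` such that
for all `x ∈ U`, `∇_ξ Φ_x(g(x)) = 0` and the Hessian `H_ξ Φ_x(g(x))` is invertible. -/
theorem exists_unique_nondegenerate_critical_family
    (n : ℕ) (hn : 1 ≤ n) (φ : (Fin n → ℝ) → ℝ) (hφ : ContDiff ℝ 2 φ)
    (hHess : (Matrix.of fun i j : Fin n =>
        fderiv ℝ (fun y => fderiv ℝ φ y (Pi.single j 1)) 0 (Pi.single i 1)).PosDef)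
    (Φ : (Fin (n + 1) → ℝ) → (Fin (n + 1) → ℝ) → ℝ)
    (hΦ : ∀ x ξ, Φ x ξ = φ (fun i : Fin n => ξ i.castSucc) +
        ξ (Fin.last n) * ((∑ i : Fin n, ξ i.castSucc * x i.castSucc) + x (Fin.last n))) :
    ∃ U V : Set (Fin (n + 1) → ℝ),
      IsOpen U ∧ U.Nonempty ∧ IsOpen V ∧
      (∀ ξ ∈ V, ξ (Fin.last n) ∈ Set.Ioo (1/4 : ℝ) 4) ∧
      ∃! g : U → V, ∀ x : U,
        fderiv ℝ (Φ x.1) ((g x : Fin (n + 1) → ℝ)) = 0 ∧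
        (Matrix.of fun i j : Fin (n + 1) =>
          fderiv ℝ (fun y => fderiv ℝ (Φ x.1) y (Pi.single j 1))
            ((g x : Fin (n + 1) → ℝ)) (Pi.single i 1)).det ≠ 0 := by
  haveI : Nonempty (Fin n) := ⟨⟨0, hn⟩⟩
  -- gradient components of φ
  set gj : Fin n → ((Fin n → ℝ) → ℝ) := fun j y => fderiv ℝ φ y (Pi.single j 1) with hgj_def
  have hgjC : ∀ j, ContDiff ℝ 1 (gj j) := by
    intro j
    have h1 : ContDiff ℝ 1 (fderiv ℝ φ) := hφ.fderiv_right (by norm_num)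
    exact ((ContinuousLinearMap.apply ℝ ℝ (Pi.single j 1)).contDiff).comp h1
  have hgjd : ∀ j, Differentiable ℝ (gj j) := fun j => (hgjC j).differentiable one_ne_zero
  -- Hessian of φ
  set A : (Fin n → ℝ) → Matrix (Fin n) (Fin n) ℝ :=
    fun y => Matrix.of fun i j => fderiv ℝ (gj j) y (Pi.single i 1) with hA_def
  have hAcont : ∀ i j, Continuous fun y => A y i j := by
    intro i j
    have h1 : Continuous (fderiv ℝ (gj j)) := (hgjC j).continuous_fderiv one_ne_zero
    exact (ContinuousLinearMap.apply ℝ ℝ (Pi.single i 1)).continuous.comp h1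
  have hgj_apply : ∀ j y (w : Fin n → ℝ), fderiv ℝ (gj j) y w = ∑ i, w i * A y i j :=
    fun j y w => clm_pi_apply _ w
  have h0 : ∀ v : Fin n → ℝ, v ≠ 0 → 0 < ∑ i, v i * ∑ j, A 0 i j * v j := by
    intro v hv
    have h := (Matrix.posDef_iff_dotProduct_mulVec.mp hHess).2 hv
    simp [Matrix.mulVec, dotProduct] at h
    exact h
  obtain ⟨r, hrpos, hQ⟩ := qball hn A hAcont h0
  -- strict monotonicity of the gradient on the ball
  have hmono : ∀ a ∈ Metric.ball (0 : Fin n → ℝ) r, ∀ b ∈ Metric.ball (0 : Fin n → ℝ) r,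
      a ≠ b → 0 < ∑ j, (gj j a - gj j b) * (a j - b j) := by
    intro a ha b hb hab
    refine mono_grad gj hgjd _ (convex_ball 0 r) ?_ a b ha hb hab
    intro y hy w hw
    have key : ∑ j, (fderiv ℝ (gj j) y w) * w j = ∑ i, w i * ∑ j, A y i j * w j := by
      rw [← quad_comm]
      exact Finset.sum_congr rfl fun j _ => by rw [hgj_apply]
    rw [key]
    exact hQ y hy w hw
  -- a point with nonvanishing gradient
  obtain ⟨y₀, hy₀ball, hb₀⟩ : ∃ y₀ ∈ Metric.ball (0 : Fin n → ℝ) r,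
      (fun j => gj j y₀) ≠ (0 : Fin n → ℝ) := by
    by_cases h : (fun j => gj j 0) = (0 : Fin n → ℝ)
    · refine ⟨(fun _ => r/2 : Fin n → ℝ), ?_, ?_⟩
      · rw [Metric.mem_ball, dist_zero_right, pi_norm_const]
        rw [Real.norm_eq_abs, abs_of_pos (by linarith)]
        linarith
      · intro hcontra
        have hne : (fun _ => r/2 : Fin n → ℝ) ≠ 0 := by
          intro h0'
          have := congrFun h0' ⟨0, hn⟩
          simp at this
          linarith
        have hball : (fun _ => r/2 : Fin n → ℝ) ∈ Metric.ball (0 : Fin n → ℝ) r := by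
          rw [Metric.mem_ball, dist_zero_right, pi_norm_const]
          rw [Real.norm_eq_abs, abs_of_pos (by linarith)]
          linarith
        have hm := hmono _ hball 0 (Metric.mem_ball_self hrpos) hne
        have hz : ∑ j, (gj j (fun _ => r/2 : Fin n → ℝ) - gj j 0) * ((r/2) - (0 : Fin n → ℝ) j) = 0 := by
          refine Finset.sum_eq_zero fun j _ => ?_
          rw [congrFun hcontra j, congrFun h j]
          simp
        rw [hz] at hm
        exact lt_irrefl _ hm
    · exact ⟨0, Metric.mem_ball_self hrpos, h⟩
  set b₀ : Fin n → ℝ := fun j => gj j y₀ with hb₀_def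
  -- derivative machinery for Φ
  set πCLM : (Fin (n+1) → ℝ) →L[ℝ] (Fin n → ℝ) :=
    ContinuousLinearMap.pi (fun j : Fin n => ContinuousLinearMap.proj j.castSucc) with hπ_def
  have hπ_apply : ∀ (v : Fin (n+1) → ℝ), πCLM v = fun i : Fin n => v i.castSucc := fun v => rfl
  set dcx : (Fin (n+1) → ℝ) → (Fin (n+1) → ℝ) →L[ℝ] ℝ :=
    fun x => ∑ i : Fin n, x i.castSucc • ContinuousLinearMap.proj i.castSucc with hdcx_def
  have hdcx_apply : ∀ x v, dcx x v = ∑ i : Fin n, x i.castSucc * v i.castSucc := by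
    intro x v
    rw [hdcx_def]
    simp [ContinuousLinearMap.sum_apply]
  set D : (Fin (n+1) → ℝ) → (Fin (n+1) → ℝ) → (Fin (n+1) → ℝ) →L[ℝ] ℝ := fun x ξ =>
    ((fderiv ℝ φ (fun i : Fin n => ξ i.castSucc)).comp πCLM) +
      (ξ (Fin.last n) • dcx x +
        ((∑ i : Fin n, ξ i.castSucc * x i.castSucc) + x (Fin.last n)) •
          ContinuousLinearMap.proj (Fin.last n)) with hD_def
  have hD : ∀ x ξ, HasFDerivAt (Φ x) (D x ξ) ξ := by
    intro x ξ
    have hΦx : Φ x = fun ξ => φ (fun i : Fin n => ξ i.castSucc) +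
        ξ (Fin.last n) * ((∑ i : Fin n, ξ i.castSucc * x i.castSucc) + x (Fin.last n)) :=
      funext (hΦ x)
    rw [hΦx]
    have h1 : HasFDerivAt (fun ξ : Fin (n+1) → ℝ => φ (fun i : Fin n => ξ i.castSucc))
        ((fderiv ℝ φ (fun i : Fin n => ξ i.castSucc)).comp πCLM) ξ :=
      ((hφ.differentiable (by norm_num) _).hasFDerivAt).comp ξ πCLM.hasFDerivAt
    have h2 : HasFDerivAt (fun ξ : Fin (n+1) → ℝ => ξ (Fin.last n))
        (ContinuousLinearMap.proj (Fin.last n) : (Fin (n+1) → ℝ) →L[ℝ] ℝ) ξ :=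
      hasFDerivAt_apply (Fin.last n) ξ
    have h3 : HasFDerivAt
        (fun ξ : Fin (n+1) → ℝ => (∑ i : Fin n, ξ i.castSucc * x i.castSucc) + x (Fin.last n))
        (dcx x) ξ := by
      refine HasFDerivAt.add_const _ ?_
      exact HasFDerivAt.fun_sum fun i _ =>
        (hasFDerivAt_apply i.castSucc ξ).mul_const _
    exact h1.add (h2.mul h3)
  have hfderivΦ : ∀ x ξ, fderiv ℝ (Φ x) ξ = D x ξ := fun x ξ => (hD x ξ).fderiv
  have hDapply : ∀ x ξ v, D x ξ v =
      (∑ j : Fin n, v j.castSucc *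
        (gj j (fun i : Fin n => ξ i.castSucc) + ξ (Fin.last n) * x j.castSucc)) +
      v (Fin.last n) * ((∑ i : Fin n, ξ i.castSucc * x i.castSucc) + x (Fin.last n)) := by
    intro x ξ v
    have e1 : D x ξ v = fderiv ℝ φ (fun i : Fin n => ξ i.castSucc) (πCLM v) +
        (ξ (Fin.last n) * (dcx x v) +
          ((∑ i : Fin n, ξ i.castSucc * x i.castSucc) + x (Fin.last n)) * v (Fin.last n)) := by
      rw [hD_def]
      simp [ContinuousLinearMap.add_apply, ContinuousLinearMap.smul_apply, smul_eq_mul]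
    rw [e1, clm_pi_apply (fderiv ℝ φ (fun i : Fin n => ξ i.castSucc)) (πCLM v),
      hdcx_apply]
    have e2 : ∀ i : Fin n, (πCLM v) i = v i.castSucc := fun i => rfl
    simp only [e2]
    have e3 : ∑ j : Fin n, v j.castSucc *
        (gj j (fun i : Fin n => ξ i.castSucc) + ξ (Fin.last n) * x j.castSucc) =
        (∑ j : Fin n, v j.castSucc * gj j (fun i : Fin n => ξ i.castSucc)) +
          ξ (Fin.last n) * ∑ i : Fin n, x i.castSucc * v i.castSucc := by
      rw [Finset.mul_sum, ← Finset.sum_add_distrib]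
      exact Finset.sum_congr rfl fun j _ => by ring
    rw [e3]
    ring
  -- characterisation of critical points
  have hcrit : ∀ x ξ, fderiv ℝ (Φ x) ξ = 0 ↔
      ((∀ j : Fin n, gj j (fun i : Fin n => ξ i.castSucc) + ξ (Fin.last n) * x j.castSucc = 0) ∧
        (∑ i : Fin n, ξ i.castSucc * x i.castSucc) + x (Fin.last n) = 0) := by
    intro x ξ
    rw [hfderivΦ]
    constructor
    · intro h
      have hv : ∀ v, D x ξ v = 0 := by
        intro v
        rw [h]
        rfl
      constructor
      · intro j
        have := hv (Pi.single j.castSucc 1)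
        rw [hDapply] at this
        rw [Finset.sum_eq_single j] at this
        · simpa [Pi.single_apply, Fin.castSucc_inj, (Fin.castSucc_lt_last j).ne] using this
        · intro k _ hk
          rw [Pi.single_apply]
          rw [if_neg (by simpa [Fin.castSucc_inj] using hk)]
          ring
        · intro hj
          exact absurd (Finset.mem_univ j) hj
      · have := hv (Pi.single (Fin.last n) 1)
        rw [hDapply] at this
        have hz : ∑ j : Fin n, (Pi.single (Fin.last n) (1:ℝ) : Fin (n+1) → ℝ) j.castSucc *
            (gj j (fun i : Fin n => ξ i.castSucc) + ξ (Fin.last n) * x j.castSucc) = 0 := by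
          refine Finset.sum_eq_zero fun j _ => ?_
          rw [Pi.single_apply, if_neg (Fin.castSucc_lt_last j).ne]
          ring
        rw [hz] at this
        simpa using this
    · rintro ⟨h1, h2⟩
      ext v
      rw [ContinuousLinearMap.zero_apply, hDapply]
      rw [h2]
      have : ∑ j : Fin n, v j.castSucc *
          (gj j (fun i : Fin n => ξ i.castSucc) + ξ (Fin.last n) * x j.castSucc) = 0 :=
        Finset.sum_eq_zero fun j _ => by rw [h1 j]; ring
      rw [this]
      ring
  -- Hessian entries
  have hDsc : ∀ x ξ (j : Fin n), D x ξ (Pi.single j.castSucc 1) =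
      gj j (fun i : Fin n => ξ i.castSucc) + ξ (Fin.last n) * x j.castSucc := by
    intro x ξ j
    rw [hDapply]
    rw [Finset.sum_eq_single j]
    · simp [Pi.single_apply, (Fin.castSucc_lt_last j).ne]
    · intro k _ hk
      rw [Pi.single_apply, if_neg (by simpa [Fin.castSucc_inj] using hk)]
      ring
    · intro hj
      exact absurd (Finset.mem_univ j) hj
  have hDsl : ∀ x ξ, D x ξ (Pi.single (Fin.last n) 1) =
      (∑ i : Fin n, ξ i.castSucc * x i.castSucc) + x (Fin.last n) := by
    intro x ξ
    rw [hDapply]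
    have hz : ∑ j : Fin n, (Pi.single (Fin.last n) (1:ℝ) : Fin (n+1) → ℝ) j.castSucc *
        (gj j (fun i : Fin n => ξ i.castSucc) + ξ (Fin.last n) * x j.castSucc) = 0 := by
      refine Finset.sum_eq_zero fun j _ => ?_
      rw [Pi.single_apply, if_neg (Fin.castSucc_lt_last j).ne]
      ring
    rw [hz]
    simp
  have hfun_c : ∀ x (j₀ : Fin n), (fun y => fderiv ℝ (Φ x) y (Pi.single j₀.castSucc 1)) =
      (fun y : Fin (n+1) → ℝ =>
        gj j₀ (fun i : Fin n => y i.castSucc) + y (Fin.last n) * x j₀.castSucc) := by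
    intro x j₀
    funext y
    rw [hfderivΦ, hDsc]
  have hfun_l : ∀ x, (fun y => fderiv ℝ (Φ x) y (Pi.single (Fin.last n) 1)) =
      (fun y : Fin (n+1) → ℝ =>
        (∑ i : Fin n, y i.castSucc * x i.castSucc) + x (Fin.last n)) := by
    intro x
    funext y
    rw [hfderivΦ, hDsl]
  have hπsingle : ∀ i₀ : Fin n,
      πCLM (Pi.single i₀.castSucc 1) = (Pi.single i₀ 1 : Fin n → ℝ) := by
    intro i₀
    funext k
    rw [hπ_apply]
    simp [Pi.single_apply, Fin.castSucc_inj]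
  have hπsingle_l : πCLM (Pi.single (Fin.last n) 1) = (0 : Fin n → ℝ) := by
    funext k
    rw [hπ_apply]
    simp [Pi.single_apply, (Fin.castSucc_lt_last k).ne]
  have hDc : ∀ (x ξ : Fin (n+1) → ℝ) (j₀ : Fin n), HasFDerivAt
      (fun y : Fin (n+1) → ℝ =>
        gj j₀ (fun i : Fin n => y i.castSucc) + y (Fin.last n) * x j₀.castSucc)
      ((fderiv ℝ (gj j₀) (fun i : Fin n => ξ i.castSucc)).comp πCLM +
        x j₀.castSucc • ContinuousLinearMap.proj (Fin.last n)) ξ := by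
    intro x ξ j₀
    exact (((hgjd j₀ _).hasFDerivAt).comp ξ πCLM.hasFDerivAt).add
      ((hasFDerivAt_apply (Fin.last n) ξ).mul_const _)
  have hDl : ∀ x (ξ : Fin (n+1) → ℝ), HasFDerivAt
      (fun y : Fin (n+1) → ℝ =>
        (∑ i : Fin n, y i.castSucc * x i.castSucc) + x (Fin.last n)) (dcx x) ξ := by
    intro x ξ
    refine HasFDerivAt.add_const _ ?_
    exact HasFDerivAt.fun_sum fun i _ => (hasFDerivAt_apply i.castSucc ξ).mul_const _
  have hN_cc : ∀ (x ξ : Fin (n+1) → ℝ) (i₀ j₀ : Fin n),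
      fderiv ℝ (fun y => fderiv ℝ (Φ x) y (Pi.single j₀.castSucc 1)) ξ
        (Pi.single i₀.castSucc 1) = A (fun i : Fin n => ξ i.castSucc) i₀ j₀ := by
    intro x ξ i₀ j₀
    rw [hfun_c, (hDc x ξ j₀).fderiv]
    rw [ContinuousLinearMap.add_apply, ContinuousLinearMap.coe_comp', Function.comp_apply,
      hπsingle, ContinuousLinearMap.smul_apply, ContinuousLinearMap.proj_apply]
    simp [Pi.single_apply, (Fin.castSucc_lt_last i₀).ne', hA_def]
  have hN_lc : ∀ (x ξ : Fin (n+1) → ℝ) (j₀ : Fin n),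
      fderiv ℝ (fun y => fderiv ℝ (Φ x) y (Pi.single j₀.castSucc 1)) ξ
        (Pi.single (Fin.last n) 1) = x j₀.castSucc := by
    intro x ξ j₀
    rw [hfun_c, (hDc x ξ j₀).fderiv]
    rw [ContinuousLinearMap.add_apply, ContinuousLinearMap.coe_comp', Function.comp_apply,
      hπsingle_l, ContinuousLinearMap.smul_apply, ContinuousLinearMap.proj_apply]
    simp
  have hN_cl : ∀ (x ξ : Fin (n+1) → ℝ) (i₀ : Fin n),
      fderiv ℝ (fun y => fderiv ℝ (Φ x) y (Pi.single (Fin.last n) 1)) ξ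
        (Pi.single i₀.castSucc 1) = x i₀.castSucc := by
    intro x ξ i₀
    rw [hfun_l, (hDl x ξ).fderiv, hdcx_apply]
    rw [Finset.sum_eq_single i₀]
    · simp [Pi.single_apply]
    · intro k _ hk
      rw [Pi.single_apply, if_neg (by simpa [Fin.castSucc_inj] using hk)]
      ring
    · intro hj
      exact absurd (Finset.mem_univ i₀) hj
  have hN_ll : ∀ (x ξ : Fin (n+1) → ℝ),
      fderiv ℝ (fun y => fderiv ℝ (Φ x) y (Pi.single (Fin.last n) 1)) ξ
        (Pi.single (Fin.last n) 1) = 0 := by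
    intro x ξ
    rw [hfun_l, (hDl x ξ).fderiv, hdcx_apply]
    refine Finset.sum_eq_zero fun k _ => ?_
    rw [Pi.single_apply, if_neg (Fin.castSucc_lt_last k).ne]
    ring
  -- nondegeneracy of the Hessian
  have hdet : ∀ x ξ : Fin (n+1) → ℝ, (fun j : Fin n => x j.castSucc) ≠ 0 →
      (fun j : Fin n => ξ j.castSucc) ∈ Metric.ball (0 : Fin n → ℝ) r →
      (Matrix.of fun i j : Fin (n+1) =>
        fderiv ℝ (fun y => fderiv ℝ (Φ x) y (Pi.single j 1)) ξ (Pi.single i 1)).det ≠ 0 := by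
    intro x ξ hx hξ
    refine det_block_ne_zero (A (fun i : Fin n => ξ i.castSucc)) (fun j : Fin n => x j.castSucc)
      hx (fun v hv => hQ _ hξ v hv) _ ?_ ?_ ?_ ?_
    · intro i j
      exact hN_cc x ξ i j
    · intro j
      exact hN_lc x ξ j
    · intro i
      exact hN_cl x ξ i
    · exact hN_ll x ξ
  -- the open set V
  set V : Set (Fin (n+1) → ℝ) := {ξ | (fun j : Fin n => ξ j.castSucc) ∈ Metric.ball (0 : Fin n → ℝ) r ∧
      ξ (Fin.last n) ∈ Set.Ioo (1/4 : ℝ) 4} with hV_def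
  have hVopen : IsOpen V := by
    have h1 : IsOpen {ξ : Fin (n+1) → ℝ |
        (fun j : Fin n => ξ j.castSucc) ∈ Metric.ball (0 : Fin n → ℝ) r} :=
      Metric.isOpen_ball.preimage (continuous_pi fun j => continuous_apply j.castSucc)
    have h2 : IsOpen {ξ : Fin (n+1) → ℝ | ξ (Fin.last n) ∈ Set.Ioo (1/4:ℝ) 4} :=
      isOpen_Ioo.preimage (continuous_apply _)
    exact h1.inter h2
  -- uniqueness of critical points in V
  have huniq : ∀ x : Fin (n+1) → ℝ, (fun j : Fin n => x j.castSucc) ≠ 0 →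
      ∀ ξ ∈ V, ∀ η ∈ V, fderiv ℝ (Φ x) ξ = 0 → fderiv ℝ (Φ x) η = 0 → ξ = η := by
    intro x hx ξ hξ η hη hcξ hcη
    rw [hcrit] at hcξ hcη
    obtain ⟨hc1, hc2⟩ := hcξ
    obtain ⟨hd1, hd2⟩ := hcη
    set a : Fin n → ℝ := fun i => ξ i.castSucc with ha_def
    set b : Fin n → ℝ := fun i => η i.castSucc with hbdef
    have hab : a = b := by
      by_contra hne
      have hm := hmono a hξ.1 b hη.1 hne
      have hsum : ∑ j, (gj j a - gj j b) * (a j - b j) =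
          (η (Fin.last n) - ξ (Fin.last n)) *
            ((∑ j, a j * x j.castSucc) - (∑ j, b j * x j.castSucc)) := by
        rw [mul_sub, Finset.mul_sum, Finset.mul_sum, ← Finset.sum_sub_distrib]
        refine Finset.sum_congr rfl fun j _ => ?_
        have e1 : gj j a = -(ξ (Fin.last n) * x j.castSucc) := by linarith [hc1 j]
        have e2 : gj j b = -(η (Fin.last n) * x j.castSucc) := by linarith [hd1 j]
        rw [e1, e2]
        ring
      have ea : ∑ j, a j * x j.castSucc = -(x (Fin.last n)) := by linarith [hc2]
      have eb : ∑ j, b j * x j.castSucc = -(x (Fin.last n)) := by linarith [hd2]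
      rw [hsum, ea, eb] at hm
      simp at hm
    have hlast : ξ (Fin.last n) = η (Fin.last n) := by
      obtain ⟨j, hj⟩ := Function.ne_iff.1 hx
      have e1 := hc1 j
      have e2 := hd1 j
      rw [hab] at e1
      have e3 : (ξ (Fin.last n) - η (Fin.last n)) * x j.castSucc = 0 := by linarith
      rcases mul_eq_zero.1 e3 with h | h
      · linarith
      · exact absurd h hj
    funext i
    refine Fin.lastCases hlast (fun j => ?_) i
    exact congrFun hab j
  -- the map K whose zeros are the critical points
  set K : (Fin (n+1) → ℝ) × (Fin (n+1) → ℝ) → (Fin (n+1) → ℝ) := fun p i =>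
    Fin.lastCases ((∑ k : Fin n, p.2 k.castSucc * p.1 k.castSucc) + p.1 (Fin.last n))
      (fun j => gj j (fun i : Fin n => p.2 i.castSucc) + p.2 (Fin.last n) * p.1 j.castSucc) i
    with hK_def
  have hK_c : ∀ p (j : Fin n), K p j.castSucc =
      gj j (fun i : Fin n => p.2 i.castSucc) + p.2 (Fin.last n) * p.1 j.castSucc := by
    intro p j
    simp [hK_def]
  have hK_l : ∀ p, K p (Fin.last n) =
      (∑ k : Fin n, p.2 k.castSucc * p.1 k.castSucc) + p.1 (Fin.last n) := by
    intro p
    simp [hK_def]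
  have hKcrit : ∀ x ξ : Fin (n+1) → ℝ, K (x, ξ) = 0 ↔ fderiv ℝ (Φ x) ξ = 0 := by
    intro x ξ
    rw [hcrit]
    constructor
    · intro h
      constructor
      · intro j
        have := congrFun h j.castSucc
        rw [hK_c] at this
        simpa using this
      · have := congrFun h (Fin.last n)
        rw [hK_l] at this
        simpa using this
    · rintro ⟨h1, h2⟩
      funext i
      refine Fin.lastCases ?_ (fun j => ?_) i
      · rw [hK_l]
        simpa using h2
      · rw [hK_c]
        simpa using h1 j
  -- coordinate projections on the product space are C¹
  have c1 : ∀ i : Fin (n+1), ContDiff ℝ 1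
      (fun p : (Fin (n+1) → ℝ) × (Fin (n+1) → ℝ) => p.1 i) := fun i =>
    ((ContinuousLinearMap.proj i : (Fin (n+1) → ℝ) →L[ℝ] ℝ)).contDiff.comp contDiff_fst
  have c2 : ∀ i : Fin (n+1), ContDiff ℝ 1
      (fun p : (Fin (n+1) → ℝ) × (Fin (n+1) → ℝ) => p.2 i) := fun i =>
    ((ContinuousLinearMap.proj i : (Fin (n+1) → ℝ) →L[ℝ] ℝ)).contDiff.comp contDiff_snd
  have hKC : ContDiff ℝ 1 K := by
    rw [hK_def, contDiff_pi]
    intro i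
    refine Fin.lastCases ?_ (fun j => ?_) i
    · simp only [Fin.lastCases_last]
      exact (ContDiff.sum fun k _ => (c2 k.castSucc).mul (c1 k.castSucc)).add (c1 (Fin.last n))
    · simp only [Fin.lastCases_castSucc]
      refine ContDiff.add ?_ ((c2 (Fin.last n)).mul (c1 j.castSucc))
      exact (hgjC j).comp (πCLM.contDiff.comp contDiff_snd)
  -- base point
  set ξ₀ : Fin (n+1) → ℝ := fun i => Fin.lastCases 1 y₀ i with hξ₀_def
  set x₀ : Fin (n+1) → ℝ := fun i =>
    Fin.lastCases (∑ k : Fin n, y₀ k * b₀ k) (fun j => -(b₀ j)) i with hx₀_def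
  have hξ₀c : ∀ j : Fin n, ξ₀ j.castSucc = y₀ j := fun j => by simp [hξ₀_def]
  have hξ₀l : ξ₀ (Fin.last n) = 1 := by simp [hξ₀_def]
  have hx₀c : ∀ j : Fin n, x₀ j.castSucc = -(b₀ j) := fun j => by simp [hx₀_def]
  have hx₀l : x₀ (Fin.last n) = ∑ k : Fin n, y₀ k * b₀ k := by simp [hx₀_def]
  have hπξ₀ : (fun i : Fin n => ξ₀ i.castSucc) = y₀ := funext hξ₀c
  have hξ₀V : ξ₀ ∈ V := by
    constructor
    · rw [hπξ₀]
      exact hy₀ball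
    · rw [hξ₀l]
      constructor <;> norm_num
  -- derivative of K at the base point
  set Tc : Fin n → (((Fin (n+1) → ℝ) × (Fin (n+1) → ℝ)) →L[ℝ] ℝ) := fun j =>
    ((fderiv ℝ (gj j) y₀).comp
        (πCLM.comp (ContinuousLinearMap.snd ℝ (Fin (n+1) → ℝ) (Fin (n+1) → ℝ)))) +
      (ξ₀ (Fin.last n) • ((ContinuousLinearMap.proj j.castSucc).comp
          (ContinuousLinearMap.fst ℝ (Fin (n+1) → ℝ) (Fin (n+1) → ℝ))) +
        x₀ j.castSucc • ((ContinuousLinearMap.proj (Fin.last n)).comp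
          (ContinuousLinearMap.snd ℝ (Fin (n+1) → ℝ) (Fin (n+1) → ℝ)))) with hTc_def
  set Tl : ((Fin (n+1) → ℝ) × (Fin (n+1) → ℝ)) →L[ℝ] ℝ :=
    (∑ k : Fin n, (ξ₀ k.castSucc • ((ContinuousLinearMap.proj k.castSucc).comp
          (ContinuousLinearMap.fst ℝ (Fin (n+1) → ℝ) (Fin (n+1) → ℝ))) +
        x₀ k.castSucc • ((ContinuousLinearMap.proj k.castSucc).comp
          (ContinuousLinearMap.snd ℝ (Fin (n+1) → ℝ) (Fin (n+1) → ℝ))))) +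
      (ContinuousLinearMap.proj (Fin.last n)).comp
        (ContinuousLinearMap.fst ℝ (Fin (n+1) → ℝ) (Fin (n+1) → ℝ)) with hTl_def
  set T : ((Fin (n+1) → ℝ) × (Fin (n+1) → ℝ)) →L[ℝ] (Fin (n+1) → ℝ) :=
    ContinuousLinearMap.pi (fun i => Fin.lastCases Tl Tc i) with hT_def
  have hsnd_ap : ∀ (i : Fin (n+1)) (p : (Fin (n+1) → ℝ) × (Fin (n+1) → ℝ)),
      HasFDerivAt (fun p : (Fin (n+1) → ℝ) × (Fin (n+1) → ℝ) => p.2 i)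
        ((ContinuousLinearMap.proj i).comp
          (ContinuousLinearMap.snd ℝ (Fin (n+1) → ℝ) (Fin (n+1) → ℝ))) p := by
    intro i p
    exact (hasFDerivAt_apply i p.2).comp p (hasFDerivAt_snd (𝕜 := ℝ) (p := p))
  have hfst_ap : ∀ (i : Fin (n+1)) (p : (Fin (n+1) → ℝ) × (Fin (n+1) → ℝ)),
      HasFDerivAt (fun p : (Fin (n+1) → ℝ) × (Fin (n+1) → ℝ) => p.1 i)
        ((ContinuousLinearMap.proj i).comp
          (ContinuousLinearMap.fst ℝ (Fin (n+1) → ℝ) (Fin (n+1) → ℝ))) p := by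
    intro i p
    exact (hasFDerivAt_apply i p.1).comp p (hasFDerivAt_fst (𝕜 := ℝ) (p := p))
  have hKT : HasFDerivAt K T (x₀, ξ₀) := by
    rw [hasFDerivAt_pi']
    intro i
    rw [hT_def, ContinuousLinearMap.proj_pi]
    refine Fin.lastCases ?_ (fun j => ?_) i
    · simp only [Fin.lastCases_last]
      have hfun : (fun p : (Fin (n+1) → ℝ) × (Fin (n+1) → ℝ) => K p (Fin.last n)) =
          fun p => (∑ k : Fin n, p.2 k.castSucc * p.1 k.castSucc) + p.1 (Fin.last n) :=
        funext fun p => hK_l p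
      rw [hfun, hTl_def]
      refine HasFDerivAt.add ?_ (hfst_ap (Fin.last n) (x₀, ξ₀))
      refine HasFDerivAt.fun_sum fun k _ => ?_
      exact (hsnd_ap k.castSucc (x₀, ξ₀)).mul (hfst_ap k.castSucc (x₀, ξ₀))
    · simp only [Fin.lastCases_castSucc]
      have hfun : (fun p : (Fin (n+1) → ℝ) × (Fin (n+1) → ℝ) => K p j.castSucc) =
          fun p => gj j (fun i : Fin n => p.2 i.castSucc) + p.2 (Fin.last n) * p.1 j.castSucc :=
        funext fun p => hK_c p j
      rw [hfun, hTc_def]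
      refine HasFDerivAt.add ?_ ((hsnd_ap (Fin.last n) (x₀, ξ₀)).mul (hfst_ap j.castSucc (x₀, ξ₀)))
      have h1 := ((hgjd j (fun i : Fin n => ξ₀ i.castSucc)).hasFDerivAt).comp (x₀, ξ₀)
        (πCLM.hasFDerivAt.comp (x₀, ξ₀) (hasFDerivAt_snd (p := (x₀, ξ₀))))
      rw [hπξ₀] at h1
      exact h1
  -- apply formulas for T
  have hT_c : ∀ (z : (Fin (n+1) → ℝ) × (Fin (n+1) → ℝ)) (j : Fin n),
      T z j.castSucc = fderiv ℝ (gj j) y₀ (πCLM z.2) +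
        (ξ₀ (Fin.last n) * z.1 j.castSucc + x₀ j.castSucc * z.2 (Fin.last n)) := by
    intro z j
    rw [hT_def]
    simp [hTc_def]
  have hT_l : ∀ z : (Fin (n+1) → ℝ) × (Fin (n+1) → ℝ),
      T z (Fin.last n) = (∑ k : Fin n,
        (ξ₀ k.castSucc * z.1 k.castSucc + x₀ k.castSucc * z.2 k.castSucc)) +
        z.1 (Fin.last n) := by
    intro z
    rw [hT_def]
    simp [hTl_def, ContinuousLinearMap.sum_apply]
  -- the full derivative and its invertibility
  set DΨ : ((Fin (n+1) → ℝ) × (Fin (n+1) → ℝ)) →L[ℝ]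
      ((Fin (n+1) → ℝ) × (Fin (n+1) → ℝ)) :=
    (ContinuousLinearMap.fst ℝ (Fin (n+1) → ℝ) (Fin (n+1) → ℝ)).prod T with hDΨ_def
  have hΨF : HasFDerivAt (fun p : (Fin (n+1) → ℝ) × (Fin (n+1) → ℝ) => (p.1, K p))
      DΨ (x₀, ξ₀) := (hasFDerivAt_fst (p := (x₀, ξ₀))).prodMk hKT
  have hker : ∀ z : (Fin (n+1) → ℝ) × (Fin (n+1) → ℝ), DΨ z = 0 → z = 0 := by
    rintro ⟨u, v⟩ hz
    rw [hDΨ_def, ContinuousLinearMap.prod_apply] at hz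
    have hz1 : u = 0 := (Prod.ext_iff.1 hz).1
    have hz2 : T (u, v) = 0 := (Prod.ext_iff.1 hz).2
    subst hz1
    have ej : ∀ j : Fin n, fderiv ℝ (gj j) y₀ (πCLM v) + x₀ j.castSucc * v (Fin.last n) = 0 := by
      intro j
      have := congrFun hz2 j.castSucc
      rw [hT_c] at this
      simpa using this
    have el : ∑ k : Fin n, x₀ k.castSucc * v k.castSucc = 0 := by
      have := congrFun hz2 (Fin.last n)
      rw [hT_l] at this
      simpa using this
    set w : Fin n → ℝ := fun i => v i.castSucc with hw_def
    have hπv : πCLM v = w := rfl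
    have hw0 : w = 0 := by
      by_contra hw
      have hq := hQ y₀ hy₀ball w hw
      have hcalc : ∑ i, w i * ∑ j, A y₀ i j * w j = 0 := by
        rw [← quad_comm]
        have : ∀ j : Fin n, ∑ i, w i * A y₀ i j = -(x₀ j.castSucc * v (Fin.last n)) := by
          intro j
          rw [← hgj_apply]
          have := ej j
          rw [hπv] at this
          linarith
        rw [Finset.sum_congr rfl fun j _ => by rw [this j]]
        have e2 : ∑ j : Fin n, -(x₀ j.castSucc * v (Fin.last n)) * w j =
            -(v (Fin.last n)) * ∑ j : Fin n, x₀ j.castSucc * w j := by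
          rw [Finset.mul_sum]
          exact Finset.sum_congr rfl fun j _ => by ring
        rw [e2]
        have e3 : ∑ j : Fin n, x₀ j.castSucc * w j = 0 := el
        rw [e3, mul_zero]
      rw [hcalc] at hq
      exact lt_irrefl _ hq
    have hvl : v (Fin.last n) = 0 := by
      obtain ⟨j, hj⟩ := Function.ne_iff.1 hb₀
      have := ej j
      rw [hπv, hw0, map_zero, zero_add] at this
      have hx0j : x₀ j.castSucc ≠ 0 := by
        rw [hx₀c]
        exact neg_ne_zero.2 hj
      rcases mul_eq_zero.1 this with h | h
      · exact absurd h hx0j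
      · exact h
    have hv : v = 0 := by
      funext i
      refine Fin.lastCases hvl (fun j => ?_) i
      exact congrFun hw0 j
    rw [hv]
    rfl
  have hinj : Function.Injective DΨ := by
    intro a b hab
    have := hker (a - b) (by rw [map_sub, hab, sub_self])
    exact sub_eq_zero.1 this
  have hbij : Function.Bijective ((DΨ : ((Fin (n+1) → ℝ) × (Fin (n+1) → ℝ)) →ₗ[ℝ]
      ((Fin (n+1) → ℝ) × (Fin (n+1) → ℝ)))) := by
    refine ⟨hinj, ?_⟩
    exact LinearMap.injective_iff_surjective.1 hinj
  set eqv : ((Fin (n+1) → ℝ) × (Fin (n+1) → ℝ)) ≃L[ℝ]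
      ((Fin (n+1) → ℝ) × (Fin (n+1) → ℝ)) :=
    LinearEquiv.toContinuousLinearEquiv (LinearEquiv.ofBijective _ hbij) with heqv_def
  have heqv : (eqv : ((Fin (n+1) → ℝ) × (Fin (n+1) → ℝ)) →L[ℝ]
      ((Fin (n+1) → ℝ) × (Fin (n+1) → ℝ))) = DΨ := by
    apply ContinuousLinearMap.ext
    intro z
    show (LinearEquiv.ofBijective _ hbij).toContinuousLinearEquiv z = DΨ z
    rw [LinearEquiv.coe_toContinuousLinearEquiv']
    rfl
  have hstrict : HasStrictFDerivAt
      (fun p : (Fin (n+1) → ℝ) × (Fin (n+1) → ℝ) => (p.1, K p))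
      (eqv : ((Fin (n+1) → ℝ) × (Fin (n+1) → ℝ)) →L[ℝ]
        ((Fin (n+1) → ℝ) × (Fin (n+1) → ℝ))) (x₀, ξ₀) := by
    rw [heqv, ← hΨF.fderiv]
    exact ((contDiff_fst.prodMk hKC).contDiffAt).hasStrictFDerivAt one_ne_zero
  set P := HasStrictFDerivAt.toOpenPartialHomeomorph _ hstrict with hP_def
  have hPcoe : ⇑P = (fun p : (Fin (n+1) → ℝ) × (Fin (n+1) → ℝ) => (p.1, K p)) :=
    hstrict.toOpenPartialHomeomorph_coe
  have hPsrc : (x₀, ξ₀) ∈ P.source := hstrict.mem_toOpenPartialHomeomorph_source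
  set W := P.source ∩ (Set.univ ×ˢ V) with hW_def
  have hWopen : IsOpen W := P.open_source.inter (isOpen_univ.prod hVopen)
  have himg : IsOpen (⇑P '' W) :=
    P.isOpen_image_of_subset_source hWopen Set.inter_subset_left
  have hK₀ : K (x₀, ξ₀) = 0 := by
    rw [hKcrit, hcrit]
    constructor
    · intro j
      rw [hπξ₀, hξ₀l, hx₀c]
      have : gj j y₀ = b₀ j := rfl
      rw [this]
      ring
    · rw [hx₀l]
      have e : ∀ i : Fin n, ξ₀ i.castSucc * x₀ i.castSucc = -(y₀ i * b₀ i) := by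
        intro i
        rw [hξ₀c, hx₀c]
        ring
      rw [Finset.sum_congr rfl fun i _ => e i]
      rw [Finset.sum_neg_distrib]
      ring
  have hPx₀ : P (x₀, ξ₀) = (x₀, 0) := by
    have : P (x₀, ξ₀) = (x₀, K (x₀, ξ₀)) := congrFun hPcoe (x₀, ξ₀)
    rw [this, hK₀]
  set U := ((fun x : Fin (n+1) → ℝ => (x, (0 : Fin (n+1) → ℝ))) ⁻¹' (⇑P '' W)) ∩
      {x : Fin (n+1) → ℝ | (fun j : Fin n => x j.castSucc) ≠ 0} with hU_def
  have hUopen : IsOpen U := by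
    refine IsOpen.inter (himg.preimage (continuous_id.prodMk continuous_const)) ?_
    have hrw : {x : Fin (n+1) → ℝ | (fun j : Fin n => x j.castSucc) ≠ 0}
        = (fun x : Fin (n+1) → ℝ => (fun j : Fin n => x j.castSucc)) ⁻¹'
          ({(0 : Fin n → ℝ)}ᶜ) := rfl
    rw [hrw]
    exact isOpen_compl_singleton.preimage (continuous_pi fun j => continuous_apply j.castSucc)
  have hx₀π : (fun j : Fin n => x₀ j.castSucc) ≠ 0 := by
    intro h
    apply hb₀
    funext j
    have hh := congrFun h j
    rw [hx₀c] at hh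
    simpa using neg_eq_zero.1 (by simpa using hh)
  have hWmem : (x₀, ξ₀) ∈ W := ⟨hPsrc, ⟨Set.mem_univ _, hξ₀V⟩⟩
  have hx₀U : x₀ ∈ U := ⟨⟨(x₀, ξ₀), hWmem, hPx₀⟩, hx₀π⟩
  have hex : ∀ x : Fin (n+1) → ℝ, x ∈ U → ∃ ξ, ξ ∈ V ∧ fderiv ℝ (Φ x) ξ = 0 := by
    intro x hx
    obtain ⟨p, hpW, hpP⟩ := hx.1
    rw [hPcoe] at hpP
    have h1 : p.1 = x := (Prod.ext_iff.1 hpP).1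
    have h2 : K p = 0 := (Prod.ext_iff.1 hpP).2
    refine ⟨p.2, hpW.2.2, ?_⟩
    have hp : p = (x, p.2) := by
      rw [← h1]
    rw [hp] at h2
    exact (hKcrit x p.2).1 h2
  refine ⟨U, V, hUopen, ⟨x₀, hx₀U⟩, hVopen, fun ξ hξ => hξ.2, ?_⟩
  choose ξf hξf using hex
  refine ⟨fun x => ⟨ξf x.1 x.2, (hξf x.1 x.2).1⟩, fun x => ⟨(hξf x.1 x.2).2, ?_⟩, ?_⟩
  · exact hdet x.1 (ξf x.1 x.2) x.2.2 ((hξf x.1 x.2).1).1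
  · intro g' hg'
    funext x
    apply Subtype.ext
    exact huniq x.1 x.2.2 ((g' x) : Fin (n+1) → ℝ) (g' x).2 _ ((hξf x.1 x.2).1)
      (hg' x).1 ((hξf x.1 x.2).2)
end
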